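/- Fix d ≥ 0. Let π be a 213-avoiding permutation of {1,…,n} and let ρ = φ(π) be the corresponding Dyck path of semilength n under the standard bijection φ. Then π contains the bivincular pattern σ_d if and only if ρ contains DDU^{d+1} (two down steps followed by d+1 up steps) as a factor, i.e. as a subword of consecutive steps. -/

import Mathlib

/-- Entry of the word `w` at (1-based) position `i`. -/
def ent (w : List ℕ) (i : ℕ) : ℕ := w.getD (i - 1) 0

/-- `w` is an endofunction of `{1,…,n}`, where `n = w.length`. -/
def IsEndo (w : List ℕ) : Prop := ∀ x ∈ w, 1 ≤ x ∧ x ≤ w.length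

/-- `w` is an inversion sequence. -/
def IsInvSeq (w : List ℕ) : Prop :=
  ∀ i ∈ Finset.Icc 1 w.length, 1 ≤ ent w i ∧ ent w i ≤ i

/-- The set of `d`-ascents of `w` (1-based positions): position `1` is always a
`d`-ascent, and `i ≥ 2` is a `d`-ascent if `a_i > a_{i-1} - d`. -/
def ascSet (d : ℕ) (w : List ℕ) : Finset ℕ :=
  (Finset.Icc 1 w.length).filter fun i => i = 1 ∨ ent w (i - 1) < ent w i + d

/-- The number of `d`-ascents of `w`. -/
def ascCard (d : ℕ) (w : List ℕ) : ℕ := (ascSet d w).card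

/-- `w` is a `d`-ascent sequence. -/
def IsDAscSeq (d : ℕ) (w : List ℕ) : Prop :=
  IsEndo w ∧ ∀ i ∈ Finset.Icc 1 w.length, ent w i ≤ 1 + ascCard d (w.take (i - 1))

/-- One step of the map `M`: add one to every entry strictly to the left of
position `j` that is weakly larger than the entry in position `j`. -/
def Mstep (w : List ℕ) (j : ℕ) : List ℕ :=
  w.mapIdx fun k x => if k + 1 < j ∧ ent w j ≤ x then x + 1 else x

/-- The `d`-hat map: apply `Mstep` successively at the `d`-ascents of `w`,
listed in increasing order. -/
def hatd (d : ℕ) (w : List ℕ) : List ℕ :=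
  ((ascSet d w).sort (· ≤ ·)).foldl Mstep w

/-- Largest entry of `w`. -/
def maxEnt (w : List ℕ) : ℕ := w.foldr max 0

/-- `w` is a Cayley permutation: its image is `{1,…,max w}`. -/
def IsCayley (w : List ℕ) : Prop := ∀ x, x ∈ w ↔ (1 ≤ x ∧ x ≤ maxEnt w)

open Classical in
/-- The set of positions of leftmost copies of the values of `w`. -/
noncomputable def nubSet (w : List ℕ) : Finset ℕ :=
  (Finset.Icc 1 w.length).filter fun i =>
    ∀ j ∈ Finset.Icc 1 w.length, ent w j = ent w i → i ≤ j

/-- The least `d` such that `w` is a `d`-ascent sequence. -/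
noncomputable def mind (w : List ℕ) : ℕ := sInf {d | IsDAscSeq d w}

/-- The set `H(w)` of all the (meaningful) `d`-hats of `w`. -/
def Hset (w : List ℕ) : Set (List ℕ) := {x | ∃ d, mind w ≤ d ∧ x = hatd d w}

/-- The max-hat map. -/
def hatmax (w : List ℕ) : List ℕ := hatd (w.length - 1) w

/-- Weak descent set of `w`. -/
def wDesSet (w : List ℕ) : Finset ℕ :=
  (Finset.Icc 2 w.length).filter fun i => ent w i ≤ ent w (i - 1)

/-- The number of weak descents of `w`. -/
def wdes (w : List ℕ) : ℕ := (wDesSet w).card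

/-- `i` is a right-left minimum index of `w`. -/
def IsRLMinIdx (w : List ℕ) (i : ℕ) : Prop :=
  1 ≤ i ∧ i ≤ w.length ∧ ∀ j, i < j → j ≤ w.length → ent w i < ent w j

/-- The set of right-left minima pairs of `w`. -/
def rlMinP (w : List ℕ) : Set (ℕ × ℕ) :=
  {p | IsRLMinIdx w p.1 ∧ p.2 = ent w p.1}

/-- `w` is the word of a permutation of `{1,…,n}`, where `n = w.length`. -/
def IsPermWord (w : List ℕ) : Prop :=
  w.Nodup ∧ ∀ x ∈ w, 1 ≤ x ∧ x ≤ w.length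

/-- Add one to every entry of `w` that is `≥ a`. -/
def plus (w : List ℕ) (a : ℕ) : List ℕ :=
  w.map fun x => if a ≤ x then x + 1 else x

/-- Add one to every entry of `w` that is `≥ a`, then append `a` at the end. -/
def plusApp (w : List ℕ) (a : ℕ) : List ℕ := plus w a ++ [a]

/-- The index of the maximal increasing run of `w` containing position `i`:
one plus the number of descents up to position `i`. -/
def irIdx (w : List ℕ) (i : ℕ) : ℕ :=
  1 + ((Finset.Icc 2 i).filter fun j => ent w j < ent w (j - 1)).card

/-- `w` is ir-subdiagonal: every entry `c` in the `i`th maximal increasing run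
satisfies `c ≤ n + 1 - i`. -/
def IsIrSub (w : List ℕ) : Prop :=
  ∀ i ∈ Finset.Icc 1 w.length, ent w i + irIdx w i ≤ w.length + 1

/-- The index of the maximal decreasing run of `w` containing position `i`. -/
def drIdx (w : List ℕ) (i : ℕ) : ℕ :=
  1 + ((Finset.Icc 2 i).filter fun j => ent w (j - 1) < ent w j).card

/-- `w` is dr-subdiagonal: every entry `c` in the `i`th maximal decreasing run
satisfies `c ≤ n + 1 - i`. -/
def IsDrSub (w : List ℕ) : Prop :=
  ∀ i ∈ Finset.Icc 1 w.length, ent w i + drIdx w i ≤ w.length + 1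

/-- `w` is a weak descent sequence. -/
def IsWDesSeq (w : List ℕ) : Prop :=
  IsInvSeq w ∧ ∀ i ∈ Finset.Icc 1 w.length, ent w i ≤ 1 + wdes (w.take (i - 1))

/-- `w` is a primitive ascent sequence: an ascent sequence with no flat steps. -/
def IsPrimAscSeq (w : List ℕ) : Prop :=
  IsDAscSeq 0 w ∧ ∀ i ∈ Finset.Icc 1 (w.length - 1), ent w i ≠ ent w (i + 1)

/-- Insert position `i` into a list of positions sorted by the Burge order:
ascending entries, ties broken by descending position. -/
def bInsert (w : List ℕ) (i : ℕ) : List ℕ → List ℕ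
  | [] => [i]
  | j :: t =>
      if ent w i < ent w j ∨ (ent w i = ent w j ∧ j ≤ i) then i :: j :: t
      else j :: bInsert w i t

/-- The permutation `burget w` obtained from the Burge transpose of the biword
with top row `1,…,n` and bottom row `w`: sort the positions `1,…,n` in
ascending order of their entries, breaking ties in descending order of
position. -/
def burget (w : List ℕ) : List ℕ :=
  ((List.range w.length).map (· + 1)).foldr (bInsert w) []

/-- The standard bijection `φ` from `213`-avoiding permutations to Dyck paths,
as a relation: `φ(ε) = ε` and `φ(p L R) = U φ(L) D φ(R)` where every entry of
`L` is larger than `p` and every entry of `R` is smaller than `p`. Up steps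
are `true` and down steps are `false`. -/
inductive PhiRel : List ℕ → List Bool → Prop
  | nil : PhiRel [] []
  | node (p : ℕ) (L R : List ℕ) (dL dR : List Bool) :
      (∀ x ∈ L, p < x) → (∀ x ∈ R, x < p) →
      PhiRel L dL → PhiRel R dR →
      PhiRel (p :: (L ++ R)) (true :: (dL ++ false :: dR))

/-- `w` contains the classical pattern `213`. -/
def Contains213 (w : List ℕ) : Prop :=
  ∃ i j k : ℕ, 1 ≤ i ∧ i < j ∧ j < k ∧ k ≤ w.length ∧
    ent w j < ent w i ∧ ent w i < ent w k

/-- `w` contains the bivincular pattern `σ_d`: there are positions `i` and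
`i + 1 < u_1 < ⋯ < u_d < j` with `p_i < p_{i+1}`,
`p_{u_1} < ⋯ < p_{u_d} < p_j` and `p_j = p_i - 1`. -/
def ContainsSigma (d : ℕ) (w : List ℕ) : Prop :=
  ∃ i j : ℕ, ∃ u : Fin d → ℕ,
    1 ≤ i ∧ i + 1 < j ∧ j ≤ w.length ∧
    StrictMono u ∧ (∀ t : Fin d, i + 1 < u t ∧ u t < j) ∧
    ent w i < ent w (i + 1) ∧
    StrictMono (fun t : Fin d => ent w (u t)) ∧
    (∀ t : Fin d, ent w (u t) < ent w j) ∧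
    ent w i = ent w j + 1



lemma ent_cons (x : ℕ) (w : List ℕ) (i : ℕ) (h : 1 ≤ i) :
    ent (x :: w) (i + 1) = ent w i := by
  unfold ent
  have : i + 1 - 1 = (i - 1) + 1 := by omega
  rw [this, List.getD_cons_succ]

lemma ent_one (x : ℕ) (w : List ℕ) : ent (x :: w) 1 = x := rfl

lemma ent_append_left (w₁ w₂ : List ℕ) (i : ℕ) (h1 : 1 ≤ i) (h : i ≤ w₁.length) :
    ent (w₁ ++ w₂) i = ent w₁ i := by
  unfold ent
  exact List.getD_append _ _ _ _ (by omega)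

lemma ent_append_right (w₁ w₂ : List ℕ) (i : ℕ) (h : w₁.length < i) :
    ent (w₁ ++ w₂) i = ent w₂ (i - w₁.length) := by
  unfold ent
  rw [List.getD_append_right _ _ _ _ (by omega)]
  congr 1
  omega

lemma ent_mem (w : List ℕ) (i : ℕ) (h1 : 1 ≤ i) (h : i ≤ w.length) : ent w i ∈ w := by
  unfold ent
  rw [List.getD_eq_getElem _ _ (by omega)]
  exact List.getElem_mem _

lemma ent_inj (w : List ℕ) (hnd : w.Nodup) (i j : ℕ) (hi1 : 1 ≤ i) (hi : i ≤ w.length)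
    (hj1 : 1 ≤ j) (hj : j ≤ w.length) (he : ent w i = ent w j) : i = j := by
  unfold ent at he
  rw [List.getD_eq_getElem _ _ (by omega : i - 1 < w.length),
      List.getD_eq_getElem _ _ (by omega : j - 1 < w.length)] at he
  have := (List.Nodup.getElem_inj_iff hnd).mp he
  omega

lemma mem_ent (w : List ℕ) (x : ℕ) (h : x ∈ w) :
    ∃ i, 1 ≤ i ∧ i ≤ w.length ∧ ent w i = x := by
  obtain ⟨i, hi, he⟩ := List.getElem_of_mem h
  refine ⟨i + 1, by omega, by omega, ?_⟩
  unfold ent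
  rw [List.getD_eq_getElem _ _ (by omega : i + 1 - 1 < w.length)]
  simpa using he


lemma PhiRel.len {w : List ℕ} {ρ : List Bool} (h : PhiRel w ρ) : ρ.length = 2 * w.length := by
  induction h with
  | nil => rfl
  | node p L R dL dR hL hR hφL hφR ihL ihR => simp [ihL, ihR]; ring

lemma PhiRel.head {w : List ℕ} {ρ : List Bool} (h : PhiRel w ρ) :
    ρ = [] ∨ ∃ ρ', ρ = true :: ρ' := by
  cases h with
  | nil => left; rfl
  | node p L R dL dR _ _ _ _ => right; exact ⟨_, rfl⟩

lemma PhiRel.last {w : List ℕ} {ρ : List Bool} (h : PhiRel w ρ) :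
    ρ = [] ∨ ∃ ρ', ρ = ρ' ++ [false] := by
  induction h with
  | nil => left; rfl
  | node p L R dL dR hL hR hφL hφR ihL ihR =>
    right
    rcases ihR with h0 | ⟨ρ', hρ'⟩
    · subst h0
      exact ⟨true :: dL, by simp⟩
    · subst hρ'
      exact ⟨true :: dL ++ false :: ρ', by simp⟩

/-- first `k` entries of `w` strictly increasing -/
def IncChain (k : ℕ) (w : List ℕ) : Prop := ∀ t, 1 ≤ t → t + 1 ≤ k → ent w t < ent w (t + 1)

lemma incChain_mono {k : ℕ} {w : List ℕ} (h : IncChain k w) :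
    ∀ s t, 1 ≤ s → s < t → t ≤ k → ent w s < ent w t := by
  intro s t hs hst htk
  induction t with
  | zero => omega
  | succ t ih =>
    rcases Nat.lt_or_ge s t with h' | h'
    · exact lt_trans (ih h' (by omega)) (h t (by omega) (by omega))
    · have : s = t := by omega
      subst this
      exact h s hs htk

lemma replicate_prefix_append {k : ℕ} {A B : List Bool} :
    List.replicate k true <+: A ++ false :: B ↔ List.replicate k true <+: A := by
  constructor
  · intro h
    induction A generalizing k with
    | nil =>
      cases k with
      | zero => simp
      | succ k =>
        exfalso
        rw [List.replicate_succ] at h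
        simp at h
    | cons x A' ih =>
      cases k with
      | zero => simp
      | succ k =>
        rw [List.replicate_succ] at h ⊢
        rw [List.cons_append, List.cons_prefix_cons] at h
        rw [List.cons_prefix_cons]
        exact ⟨h.1, ih h.2⟩
  · intro h
    exact h.trans (A.prefix_append _)

lemma ent_node_one (p : ℕ) (L R : List ℕ) : ent (p :: (L ++ R)) 1 = p := rfl

lemma ent_node_L (p : ℕ) (L R : List ℕ) (i : ℕ) (h1 : 1 ≤ i) (h : i ≤ L.length) :
    ent (p :: (L ++ R)) (i + 1) = ent L i := by
  rw [ent_cons _ _ _ h1, ent_append_left _ _ _ h1 h]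

lemma ent_node_R (p : ℕ) (L R : List ℕ) (i : ℕ) (h1 : 1 ≤ i) :
    ent (p :: (L ++ R)) (i + 1 + L.length) = ent R i := by
  have h2 : i + 1 + L.length = (i + L.length) + 1 := by ring
  rw [h2, ent_cons _ _ _ (by omega), ent_append_right _ _ _ (by omega)]
  congr 1
  omega

lemma ent_cons' (x : ℕ) (w : List ℕ) (i : ℕ) (h : 2 ≤ i) :
    ent (x :: w) i = ent w (i - 1) := by
  conv_lhs => rw [show i = (i - 1) + 1 by omega]
  rw [ent_cons _ _ _ (by omega)]

lemma PhiRel.up_prefix {w : List ℕ} {ρ : List Bool} (h : PhiRel w ρ) (k : ℕ) :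
    List.replicate k true <+: ρ ↔ k ≤ w.length ∧ IncChain k w := by
  induction h generalizing k with
  | nil =>
    constructor
    · intro h
      have := h.length_le
      simp at this
      subst this
      exact ⟨by simp, fun t ht htk => by omega⟩
    · intro ⟨h1, _⟩
      simp at h1
      subst h1
      simp
  | node p L R dL dR hL hR hφL hφR ihL ihR =>
    cases k with
    | zero => simp; intro t ht htk; omega
    | succ k =>
      rw [List.replicate_succ, List.cons_prefix_cons]
      simp only [true_and]
      rw [replicate_prefix_append, ihL]
      have hlen : (p :: (L ++ R)).length = 1 + L.length + R.length := by simp; omega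
      constructor
      · rintro ⟨hk, hc⟩
        refine ⟨by omega, ?_⟩
        intro t ht htk
        rcases Nat.lt_or_ge t 2 with h2 | h2
        · have ht1 : t = 1 := by omega
          subst ht1
          rw [ent_node_one]
          have e2 : ent (p :: (L ++ R)) (1 + 1) = ent L 1 := ent_node_L p L R 1 le_rfl (by omega)
          rw [e2]
          exact hL _ (ent_mem _ _ le_rfl (by omega))
        · have e1 : ent (p :: (L ++ R)) t = ent L (t - 1) := by
            have h' := ent_node_L p L R (t-1) (by omega : 1 ≤ t - 1) (by omega)
            rwa [show (t-1)+1 = t by omega] at h'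
          have e2 : ent (p :: (L ++ R)) (t + 1) = ent L t := ent_node_L p L R t (by omega) (by omega)
          rw [e1, e2]
          exact hc (t - 1) (by omega) (by omega)
      · rintro ⟨hk, hc⟩
        -- claim: positions 2..k+1 are in the L block with values > p
        have claim : ∀ t, 2 ≤ t → t ≤ k + 1 → t ≤ 1 + L.length ∧ p < ent (p :: (L ++ R)) t := by
          intro t
          induction t with
          | zero => omega
          | succ t ih =>
            intro h2 hk1
            have hgt : p < ent (p :: (L ++ R)) (t + 1) := by
              rcases Nat.lt_or_ge t 2 with ht2 | ht2
              · have : t = 1 := by omega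
                subst this
                have := hc 1 le_rfl (by omega)
                rwa [ent_node_one] at this
              · have ⟨_, hp⟩ := ih (by omega) (by omega)
                exact lt_trans hp (hc t (by omega) (by omega))
            refine ⟨?_, hgt⟩
            by_contra hpos
            push_neg at hpos
            have e : ent (p :: (L ++ R)) (t + 1) = ent R (t - L.length) := by
              conv_lhs => rw [show t + 1 = (t - L.length) + 1 + L.length by omega]
              exact ent_node_R p L R _ (by omega)
            rw [e] at hgt
            have : ent R (t - L.length) ∈ R :=
              ent_mem _ _ (by omega) (by omega)
            exact absurd (hR _ this) (by omega)
        constructor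
        · rcases Nat.eq_zero_or_pos k with h0 | h0
          · omega
          · have := (claim (k + 1) (by omega) le_rfl).1
            omega
        · intro s hs hsk
          have hkL : k ≤ L.length := by
            have := (claim (k + 1) (by omega) le_rfl).1
            omega
          have e1 : ent (p :: (L ++ R)) (s + 1) = ent L s := ent_node_L p L R s hs (by omega)
          have e2 : ent (p :: (L ++ R)) (s + 2) = ent L (s + 1) := by
            rw [show s + 2 = (s + 1) + 1 from rfl]
            exact ent_node_L p L R (s + 1) (by omega) (by omega)
          rw [← e1, ← e2]
          exact hc (s + 1) (by omega) (by omega)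

lemma infix_append_cases {α : Type} (s A B : List α) (h : s <:+: A ++ B) :
    s <:+: A ∨ s <:+: B ∨ ∃ s1 s2, s = s1 ++ s2 ∧ s1 <:+ A ∧ s2 <+: B := by
  induction A generalizing s with
  | nil => right; left; simpa using h
  | cons x A' ih =>
    rw [List.cons_append, List.infix_cons_iff] at h
    rcases h with h | h
    · -- s <+: (x :: A') ++ B
      rw [← List.cons_append] at h
      rcases le_or_gt s.length (x :: A').length with hl | hl
      · left
        exact (List.prefix_of_prefix_length_le h ((x :: A').prefix_append B) hl).isInfix
      · right; right
        have hA : (x :: A') <+: s :=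
          List.prefix_of_prefix_length_le ((x :: A').prefix_append B) h (by omega)
        obtain ⟨u, hu⟩ := hA
        refine ⟨x :: A', u, hu.symm, List.suffix_refl _, ?_⟩
        obtain ⟨t, ht⟩ := h
        rw [← hu, List.append_assoc] at ht
        have := List.append_cancel_left ht
        exact ⟨t, this⟩
    · rcases ih s h with h' | h' | ⟨s1, s2, he, hs1, hs2⟩
      · left
        exact h'.trans ⟨[x], [], by simp⟩
      · right; left; exact h'
      · right; right
        exact ⟨s1, s2, he, hs1.trans (A'.suffix_cons x), hs2⟩

lemma keyB (d : ℕ) {L R : List ℕ} {dL dR : List Bool} (hφL : PhiRel L dL) (hφR : PhiRel R dR) :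
    (false :: false :: List.replicate (d+1) true) <:+: (true :: (dL ++ false :: dR)) ↔
      ((false :: false :: List.replicate (d+1) true) <:+: dL ∨
       (false :: false :: List.replicate (d+1) true) <:+: dR ∨
       (dL ≠ [] ∧ List.replicate (d+1) true <+: dR)) := by
  have hdRhead : ¬ (false :: List.replicate (d+1) true <+: dR) := by
    intro hpre
    rcases hφR.head with h0 | ⟨ρ', hρ'⟩
    · subst h0; have := hpre.length_le; simp at this
    · subst hρ'
      rw [List.cons_prefix_cons] at hpre
      exact Bool.noConfusion hpre.1
  constructor
  · intro h
    rw [List.infix_cons_iff] at h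
    rcases h with h | h
    · rw [List.cons_prefix_cons] at h
      exact absurd h.1 Bool.noConfusion
    rcases infix_append_cases _ _ _ h with h' | h' | ⟨s1, s2, he, hs1, hs2⟩
    · left; exact h'
    · rw [List.infix_cons_iff] at h'
      rcases h' with h' | h'
      · rw [List.cons_prefix_cons] at h'
        exact absurd h'.2 hdRhead
      · right; left; exact h'
    · -- straddle
      rcases s2 with _ | ⟨b, s2'⟩
      · rw [List.append_nil] at he
        subst he
        left
        exact hs1.isInfix
      · have hb : b = false ∧ s2' <+: dR := by
          rw [List.cons_prefix_cons] at hs2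
          exact hs2
        rcases hb with ⟨rfl, hs2'⟩
        rcases s1 with _ | ⟨b1, s1'⟩
        · simp only [List.nil_append, List.cons.injEq] at he
          rw [← he.2] at hs2'
          exact absurd hs2' hdRhead
        · rcases s1' with _ | ⟨b2, s1''⟩
          · simp only [List.cons_append, List.nil_append, List.cons.injEq] at he
            right; right
            constructor
            · intro h0
              subst h0
              have := hs1.length_le
              simp at this
            · rw [← he.2.2] at hs2'
              exact hs2'
          · exfalso
            have he' : s1'' ++ false :: s2' = List.replicate (d+1) true := by
              have := he.symm
              simp only [List.cons_append, List.cons.injEq] at this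
              exact this.2.2
            have : false ∈ List.replicate (d+1) true := by
              rw [← he']
              exact List.mem_append_right _ List.mem_cons_self
            have := List.eq_of_mem_replicate this
            exact Bool.noConfusion this
  · intro h
    rcases h with h | h | ⟨hne, hpre⟩
    · exact h.trans ⟨[true], false :: dR, by simp⟩
    · exact h.trans ⟨true :: dL ++ [false], [], by simp⟩
    · rcases hφL.last with h0 | ⟨ρ', hρ'⟩
      · exact absurd h0 hne
      · obtain ⟨u, hu⟩ := hpre
        refine ⟨true :: ρ', u, ?_⟩
        rw [hρ', ← hu]
        simp

lemma keyA (d p a : ℕ) (L R : List ℕ)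
    (hL : ∀ x ∈ L, p < x) (hR : ∀ x ∈ R, x < p)
    (hnd : (p :: (L ++ R)).Nodup)
    (hRmem : ∀ x, a ≤ x → x < p → x ∈ R)
    (hpa : p = a + R.length)
    (h213 : ¬ Contains213 (p :: (L ++ R))) :
    ContainsSigma d (p :: (L ++ R)) ↔
      (ContainsSigma d L ∨ ContainsSigma d R ∨
        (L ≠ [] ∧ d + 1 ≤ R.length ∧ IncChain (d + 1) R)) := by
  set w := p :: (L ++ R) with hw
  have hlen : w.length = L.length + R.length + 1 := by simp [hw]
  have hndR : R.Nodup := by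
    have := (List.nodup_cons.mp hnd).2
    exact (List.nodup_append.mp this).2.1
  have eL : ∀ t, 2 ≤ t → t ≤ L.length + 1 → ent w t = ent L (t - 1) := by
    intro t h2 hl
    have h' := ent_node_L p L R (t - 1) (by omega) (by omega)
    rwa [show t - 1 + 1 = t by omega] at h'
  have eR : ∀ t, L.length + 2 ≤ t → ent w t = ent R (t - 1 - L.length) := by
    intro t h2
    have h' := ent_node_R p L R (t - 1 - L.length) (by omega)
    rwa [show t - 1 - L.length + 1 + L.length = t by omega] at h'
  have e1 : ent w 1 = p := ent_node_one p L R
  have hblockL : ∀ t, 2 ≤ t → t ≤ w.length → p < ent w t → t ≤ L.length + 1 := by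
    intro t h2 hn hp
    by_contra hc
    push_neg at hc
    rw [eR t (by omega)] at hp
    have hm : ent R (t - 1 - L.length) ∈ R := ent_mem _ _ (by omega) (by omega)
    have := hR _ hm
    omega
  have hblockR : ∀ t, 1 ≤ t → t ≤ w.length → ent w t < p → L.length + 2 ≤ t := by
    intro t h1 hn hp
    by_contra hc
    push_neg at hc
    rcases Nat.lt_or_ge t 2 with h2 | h2
    · have : t = 1 := by omega
      subst this
      omega
    · rw [eL t h2 (by omega)] at hp
      have hm : ent L (t - 1) ∈ L := ent_mem _ _ (by omega) (by omega)
      have := hL _ hm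
      omega
  constructor
  · rintro ⟨i, j, u, h1, h2, h3, hmu, hb, hinc, hmv, hlt, heq⟩
    rcases Nat.lt_or_ge i 2 with hi2 | hi2
    · -- i = 1 : the straddle case
      have hi1 : i = 1 := by omega
      subst hi1
      have hp1 : p = ent w j + 1 := by rw [← e1]; exact heq
      have hLne : L ≠ [] := by
        intro h0
        have hl0 : L.length = 0 := by rw [h0]; rfl
        have e2 : ent w 2 = ent R (2 - 1 - L.length) := eR 2 (by omega)
        have hm : ent R (2 - 1 - L.length) ∈ R := by
          apply ent_mem
          · omega
          · omega
        have := hR _ hm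
        rw [e1] at hinc
        rw [show (1 : ℕ) + 1 = 2 by rfl, e2] at hinc
        omega
      have hjR : L.length + 2 ≤ j := hblockR j (by omega) h3 (by omega)
      set j0 := j - 1 - L.length with hj0
      have hj0r : j0 ≤ R.length := by omega
      have hj01 : 1 ≤ j0 := by omega
      have ej : ent w j = ent R j0 := eR j (by omega)
      have hej0 : ent R j0 = p - 1 := by omega
      -- entries of R strictly before j0 are increasing
      have claim : ∀ t, 1 ≤ t → t + 1 ≤ j0 → ent R t < ent R (t + 1) := by
        intro t ht htj
        have hmt : ent R t ∈ R := ent_mem _ _ ht (by omega)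
        have hnej : ent R t ≠ p - 1 := by
          intro hc
          have := ent_inj R hndR t j0 ht (by omega) hj01 hj0r (by omega)
          omega
        have hlt' : ent R t < p - 1 := by
          have := hR _ hmt
          omega
        rcases Nat.eq_or_lt_of_le htj with hcase | hcase
        · -- t + 1 = j0
          rw [hcase, hej0]
          exact hlt'
        · -- t + 1 < j0 : use 213-avoidance
          by_contra hc
          push_neg at hc
          have hne : ent R (t + 1) ≠ ent R t := by
            intro hcc
            have := ent_inj R hndR (t + 1) t (by omega) (by omega) ht (by omega) hcc
            omega
          apply h213
          refine ⟨t + 1 + L.length, t + 2 + L.length, j0 + 1 + L.length, by omega, by omega,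
            by omega, by omega, ?_, ?_⟩
          · rw [eR _ (by omega), eR _ (by omega)]
            rw [show t + 2 + L.length - 1 - L.length = t + 1 by omega,
                show t + 1 + L.length - 1 - L.length = t by omega]
            omega
          · rw [eR _ (by omega), eR _ (by omega)]
            rw [show j0 + 1 + L.length - 1 - L.length = j0 by omega,
                show t + 1 + L.length - 1 - L.length = t by omega]
            omega
      -- j0 ≥ d + 1 via the u's
      have hj0d : d + 1 ≤ j0 := by
        rcases Nat.eq_zero_or_pos d with hd0 | hd0
        · omega
        · have humem : ∀ t : Fin d, L.length + 2 ≤ u t ∧ u t < j := by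
            intro t
            have hb' := hb t
            have hlt'' := hlt t
            have : ent w (u t) < p := by omega
            exact ⟨hblockR (u t) (by omega) (by omega) this, hb'.2⟩
          have hstep : ∀ m (hm : m < d), L.length + 2 + m ≤ u ⟨m, hm⟩ := by
            intro m
            induction m with
            | zero => intro hm; simpa using (humem ⟨0, hm⟩).1
            | succ m ih =>
              intro hm
              have h' := ih (by omega)
              have := hmu (show (⟨m, by omega⟩ : Fin d) < ⟨m + 1, hm⟩ by
                simp [Fin.lt_def])
              omega
          have hlast := hstep (d - 1) (by omega)
          have := (humem ⟨d - 1, by omega⟩).2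
          omega
      right; right
      refine ⟨hLne, by omega, ?_⟩
      intro t ht htk
      exact claim t ht (by omega)
    · -- i ≥ 2
      have hin : i ≤ w.length := by omega
      rcases Nat.lt_or_ge (L.length + 1) i with hiR | hiL
      · -- i in the R block
        right; left
        have hub : ∀ t : Fin d, L.length + 2 ≤ u t ∧ u t < j := fun t => ⟨by have := (hb t).1; omega, (hb t).2⟩
        refine ⟨i - 1 - L.length, j - 1 - L.length, fun t => u t - 1 - L.length,
          by omega, by omega, by omega, ?_, ?_, ?_, ?_, ?_, ?_⟩
        · intro t t' h
          have h0 := hmu h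
          have h1 := (hub t).1
          simp only []
          omega
        · intro t
          have h1 := (hub t).1
          have h2 := (hb t).1
          have h3 := (hb t).2
          simp only []
          omega
        · have ea := eR i (by omega)
          have eb := eR (i + 1) (by omega)
          rw [ea, eb] at hinc
          rwa [show i + 1 - 1 - L.length = i - 1 - L.length + 1 by omega] at hinc
        · intro t t' h
          have h0 := hmv h
          simp only [] at h0 ⊢
          rw [eR (u t) (by have := (hub t).1; omega), eR (u t') (by have := (hub t').1; omega)] at h0
          exact h0
        · intro t
          have h0 := hlt t
          rw [eR (u t) (by have := (hub t).1; omega), eR j (by omega)] at h0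
          exact h0
        · have ea := eR i (by omega)
          have eb := eR j (by omega)
          rw [ea, eb] at heq
          exact heq
      · -- i in the L block
        left
        have hvi : p < ent w i := by
          rw [eL i hi2 hiL]
          exact hL _ (ent_mem _ _ (by omega) (by omega))
        have hvj : p < ent w j := by
          rcases Nat.lt_or_ge p (ent w j) with h' | h'
          · exact h'
          rcases Nat.eq_or_lt_of_le h' with h'' | h''
          · exfalso
            have := ent_inj w hnd j 1 (by omega) h3 (by omega) (by omega) (by rw [e1, h''])
            omega
          · omega
        have hjL : j ≤ L.length + 1 := hblockL j (by omega) h3 hvj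
        have hub : ∀ t : Fin d, i + 1 < u t ∧ u t < j := hb
        refine ⟨i - 1, j - 1, fun t => u t - 1,
          by omega, by omega, by omega, ?_, ?_, ?_, ?_, ?_, ?_⟩
        · intro t t' h
          have h0 := hmu h
          have h1 := (hub t).1
          simp only []
          omega
        · intro t
          have h1 := (hub t).1
          have h2 := (hub t).2
          simp only []
          omega
        · have ea := eL i hi2 hiL
          have eb := eL (i + 1) (by omega) (by omega)
          rw [ea, eb] at hinc
          rwa [show i + 1 - 1 = i - 1 + 1 by omega] at hinc
        · intro t t' h
          have h0 := hmv h
          simp only [] at h0 ⊢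
          rw [eL (u t) (by have := (hub t).1; omega) (by have := (hub t).2; omega),
              eL (u t') (by have := (hub t').1; omega) (by have := (hub t').2; omega)] at h0
          exact h0
        · intro t
          have h0 := hlt t
          rw [eL (u t) (by have := (hub t).1; omega) (by have := (hub t).2; omega),
              eL j (by omega) hjL] at h0
          exact h0
        · have ea := eL i hi2 hiL
          have eb := eL j (by omega) hjL
          rw [ea, eb] at heq
          exact heq
  · rintro (hc | hc | ⟨hLne, hdr, hchain⟩)
    · -- lift from L
      obtain ⟨i, j, u, h1, h2, h3, hmu, hb, hinc, hmv, hlt, heq⟩ := hc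
      refine ⟨i + 1, j + 1, fun t => u t + 1,
        by omega, by omega, by omega, ?_, ?_, ?_, ?_, ?_, ?_⟩
      · intro t t' h
        have := hmu h
        simp only []
        omega
      · intro t
        have h1 := (hb t).1
        have h2 := (hb t).2
        simp only []
        omega
      · rw [eL (i + 1) (by omega) (by omega), eL (i + 1 + 1) (by omega) (by omega)]
        rw [show i + 1 - 1 = i by omega, show i + 1 + 1 - 1 = i + 1 by omega]
        exact hinc
      · intro t t' h
        have h0 := hmv h
        simp only [] at h0 ⊢
        rw [eL (u t + 1) (by have := (hb t).1; omega) (by have := (hb t).2; omega),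
            eL (u t' + 1) (by have := (hb t').1; omega) (by have := (hb t').2; omega)]
        simp only [Nat.add_sub_cancel]
        exact h0
      · intro t
        have h0 := hlt t
        rw [eL (u t + 1) (by have := (hb t).1; omega) (by have := (hb t).2; omega),
            eL (j + 1) (by omega) (by omega)]
        simp only [Nat.add_sub_cancel]
        exact h0
      · rw [eL (i + 1) (by omega) (by omega), eL (j + 1) (by omega) (by omega)]
        simp only [Nat.add_sub_cancel]
        exact heq
    · -- lift from R
      obtain ⟨i, j, u, h1, h2, h3, hmu, hb, hinc, hmv, hlt, heq⟩ := hc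
      have eRi : ∀ t, 1 ≤ t → ent w (t + 1 + L.length) = ent R t := by
        intro t ht
        rw [eR (t + 1 + L.length) (by omega)]
        congr 1
        omega
      refine ⟨i + 1 + L.length, j + 1 + L.length, fun t => u t + 1 + L.length,
        by omega, by omega, by omega, ?_, ?_, ?_, ?_, ?_, ?_⟩
      · intro t t' h
        have := hmu h
        simp only []
        omega
      · intro t
        have h1 := (hb t).1
        have h2 := (hb t).2
        simp only []
        omega
      · rw [eRi i h1]
        rw [show i + 1 + L.length + 1 = (i + 1) + 1 + L.length by omega, eRi (i + 1) (by omega)]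
        exact hinc
      · intro t t' h
        have h0 := hmv h
        simp only [] at h0 ⊢
        rw [eRi (u t) (by have := (hb t).1; omega), eRi (u t') (by have := (hb t').1; omega)]
        exact h0
      · intro t
        have h0 := hlt t
        rw [eRi (u t) (by have := (hb t).1; omega), eRi j (by omega)]
        exact h0
      · rw [eRi i h1, eRi j (by omega)]
        exact heq
    · -- the straddle case
      have hr1 : 1 ≤ R.length := by omega
      have hl1 : 1 ≤ L.length := by
        rcases L with _ | ⟨x, L'⟩
        · exact absurd rfl hLne
        · simp
      have hp1 : a + 1 ≤ p := by omega
      obtain ⟨j0, hj01, hj0r, hj0e⟩ := mem_ent R (p - 1) (hRmem (p - 1) (by omega) (by omega))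
      have hj0d : d + 1 ≤ j0 := by
        by_contra hcon
        push_neg at hcon
        have := hchain j0 hj01 (by omega)
        have hm : ent R (j0 + 1) ∈ R := ent_mem _ _ (by omega) (by omega)
        have := hR _ hm
        omega
      have eRi : ∀ t, 1 ≤ t → ent w (t + 1 + L.length) = ent R t := by
        intro t ht
        rw [eR (t + 1 + L.length) (by omega)]
        congr 1
        omega
      have edp : ent R (d + 1) ∈ R := ent_mem _ _ (by omega) (by omega)
      refine ⟨1, j0 + 1 + L.length, fun t => t.val + 2 + L.length,
        le_rfl, by omega, by omega, ?_, ?_, ?_, ?_, ?_, ?_⟩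
      · intro t t' h
        have : t.val < t'.val := h
        simp only []
        omega
      · intro t
        have := t.isLt
        simp only []
        omega
      · rw [e1]
        have e2 : ent w (1 + 1) = ent L 1 := eL 2 le_rfl (by omega)
        rw [e2]
        exact hL _ (ent_mem _ _ le_rfl hl1)
      · intro t t' h
        have hlt' : t.val < t'.val := h
        simp only []
        rw [show t.val + 2 + L.length = (t.val + 1) + 1 + L.length by omega,
            show t'.val + 2 + L.length = (t'.val + 1) + 1 + L.length by omega,
            eRi (t.val + 1) (by omega), eRi (t'.val + 1) (by omega)]
        have := t'.isLt
        exact incChain_mono hchain (t.val + 1) (t'.val + 1) (by omega) (by omega) (by omega)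
      · intro t
        have htl := t.isLt
        simp only []
        rw [show t.val + 2 + L.length = (t.val + 1) + 1 + L.length by omega,
            eRi (t.val + 1) (by omega), eRi j0 (by omega)]
        have h1' : ent R (t.val + 1) < ent R (d + 1) :=
          incChain_mono hchain (t.val + 1) (d + 1) (by omega) (by omega) (by omega)
        have h2' := hR _ edp
        omega
      · rw [e1, eRi j0 (by omega)]
        omega


lemma contains213_L {p : ℕ} {L R : List ℕ} (h : Contains213 L) :
    Contains213 (p :: (L ++ R)) := by
  obtain ⟨i, j, k, h1, h2, h3, h4, h5, h6⟩ := h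
  refine ⟨i + 1, j + 1, k + 1, by omega, by omega, by omega, by simp; omega, ?_, ?_⟩
  · rw [ent_node_L p L R i h1 (by omega), ent_node_L p L R j (by omega) (by omega)]
    exact h5
  · rw [ent_node_L p L R i h1 (by omega), ent_node_L p L R k (by omega) (by omega)]
    exact h6

lemma contains213_R {p : ℕ} {L R : List ℕ} (h : Contains213 R) :
    Contains213 (p :: (L ++ R)) := by
  obtain ⟨i, j, k, h1, h2, h3, h4, h5, h6⟩ := h
  refine ⟨i + 1 + L.length, j + 1 + L.length, k + 1 + L.length,
    by omega, by omega, by omega, by simp; omega, ?_, ?_⟩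
  · rw [ent_node_R p L R i h1, ent_node_R p L R j (by omega)]
    exact h5
  · rw [ent_node_R p L R i h1, ent_node_R p L R k (by omega)]
    exact h6

lemma mainPhi (d : ℕ) {w : List ℕ} {ρ : List Bool} (hφ : PhiRel w ρ) :
    ∀ a, w.Nodup → (∀ x ∈ w, a ≤ x ∧ x < a + w.length) → ¬ Contains213 w →
    (ContainsSigma d w ↔ (false :: false :: List.replicate (d + 1) true) <:+: ρ) := by
  induction hφ with
  | nil =>
    intro a _ _ _
    constructor
    · rintro ⟨i, j, u, h1, h2, h3, _⟩
      simp at h3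
      omega
    · intro h
      have := h.length_le
      simp at this
  | node p L R dL dR hL hR hφL hφR ihL ihR =>
    intro a hnd hbd h213
    have hlen : (p :: (L ++ R)).length = L.length + R.length + 1 := by simp
    have hndLR := (List.nodup_cons.mp hnd).2
    have hndL : L.Nodup := (List.nodup_append.mp hndLR).1
    have hndR : R.Nodup := (List.nodup_append.mp hndLR).2.1
    have hpbd := hbd p List.mem_cons_self
    rw [hlen] at hpbd
    have hsurj : ∀ x, a ≤ x → x < a + (L.length + R.length + 1) → x ∈ p :: (L ++ R) := by
      intro x hx1 hx2
      have hsub : (p :: (L ++ R)).toFinset ⊆ Finset.Ico a (a + (L.length + R.length + 1)) := by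
        intro y hy
        rw [List.mem_toFinset] at hy
        have := hbd y hy
        rw [Finset.mem_Ico]
        omega
      have heq : (p :: (L ++ R)).toFinset = Finset.Ico a (a + (L.length + R.length + 1)) := by
        apply Finset.eq_of_subset_of_card_le hsub
        rw [Nat.card_Ico, List.toFinset_card_of_nodup hnd, hlen]
        omega
      rw [← List.mem_toFinset, heq, Finset.mem_Ico]
      exact ⟨hx1, hx2⟩
    have hRmem : ∀ x, a ≤ x → x < p → x ∈ R := by
      intro x hx1 hx2
      have hx := hsurj x hx1 (by omega)
      rcases List.mem_cons.mp hx with h0 | h0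
      · omega
      rcases List.mem_append.mp h0 with h0 | h0
      · have := hL x h0
        omega
      · exact h0
    have hRlen : R.length = p - a := by
      have hsub : R.toFinset ⊆ Finset.Ico a p := by
        intro y hy
        rw [List.mem_toFinset] at hy
        have h1 := hR y hy
        have h2 := hbd y (by simp [hy])
        rw [Finset.mem_Ico]
        omega
      have hsub2 : Finset.Ico a p ⊆ R.toFinset := by
        intro y hy
        rw [Finset.mem_Ico] at hy
        rw [List.mem_toFinset]
        exact hRmem y hy.1 hy.2
      have he := Finset.Subset.antisymm hsub hsub2
      have hc := congrArg Finset.card he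
      rw [Nat.card_Ico, List.toFinset_card_of_nodup hndR] at hc
      omega
    have hpa : p = a + R.length := by omega
    have h213L : ¬ Contains213 L := fun hc => h213 (contains213_L hc)
    have h213R : ¬ Contains213 R := fun hc => h213 (contains213_R hc)
    have hbdL : ∀ x ∈ L, p + 1 ≤ x ∧ x < p + 1 + L.length := by
      intro x hx
      have h1 := hL x hx
      have h2 := hbd x (by simp [hx])
      rw [hlen] at h2
      omega
    have hbdR : ∀ x ∈ R, a ≤ x ∧ x < a + R.length := by
      intro x hx
      have h1 := hR x hx
      have h2 := hbd x (by simp [hx])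
      omega
    rw [keyB d hφL hφR, keyA d p a L R hL hR hnd hRmem hpa h213,
      ihL (p + 1) hndL hbdL h213L, ihR a hndR hbdR h213R]
    have hdLe : dL = [] ↔ L = [] := by
      have hl := hφL.len
      constructor
      · intro h0
        rw [h0] at hl
        simp only [List.length_nil] at hl
        exact List.length_eq_zero_iff.mp (by omega)
      · intro h0
        rw [h0] at hl
        simp only [List.length_nil, Nat.mul_zero] at hl
        exact List.length_eq_zero_iff.mp hl
    have hstr : (L ≠ [] ∧ d + 1 ≤ R.length ∧ IncChain (d + 1) R) ↔
        (dL ≠ [] ∧ List.replicate (d + 1) true <+: dR) := by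
      rw [hφR.up_prefix (d + 1)]
      constructor
      · rintro ⟨h1, h2⟩
        exact ⟨fun h0 => h1 (hdLe.mp h0), h2⟩
      · rintro ⟨h1, h2⟩
        exact ⟨fun h0 => h1 (hdLe.mpr h0), h2⟩
    rw [hstr]

/-- let `π` be a `213`-avoiding permutation of `{1,…,n}` and let
`ρ = φ(π)` be the corresponding Dyck path. Then `π` contains `σ_d` if and only
if `ρ` contains `D D U^{d+1}` as a factor. -/
theorem stmt19 (d : ℕ) (π : List ℕ) (hπ : IsPermWord π) (h213 : ¬ Contains213 π)
    (ρ : List Bool) (hρ : PhiRel π ρ) :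
    ContainsSigma d π ↔
      (false :: false :: List.replicate (d + 1) true) <:+: ρ := by
  exact mainPhi d hρ 1 hπ.1
    (fun x hx => ⟨(hπ.2 x hx).1, by have := (hπ.2 x hx).2; omega⟩) h213
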